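/- arXiv:math/9904067 — 6 statements merged into one kernel-verified Lean document; each statement's English description precedes it below -/
import Mathlib

section
/- Let I be a finite set and J' ⊆ J ⊆ 2^I (functions I → Bool). Suppose |J'| · 2^{-|I|} = 1 - δ and |J| · 2^{-|I|} = 1 - ε, where δ² < ε < δ. Then there exist t₁, t₂ ∈ 2^I such that for every s ∈ 2^I, (J' + t₁) ∪ (J' + t₂) is not contained in J + s, where addition is pointwise XOR (translation in the group (Z/2)^I). -/
theorem stmt_0 {I : Type*} [Fintype I] [DecidableEq I]
    (J' J : Finset (I → ZMod 2)) (hJJ : J' ⊆ J) (δ ε : ℝ)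
    (hJ' : (J'.card : ℝ) / 2 ^ Fintype.card I = 1 - δ)
    (hJ : (J.card : ℝ) / 2 ^ Fintype.card I = 1 - ε)
    (h1 : δ ^ 2 < ε) (h2 : ε < δ) :
    ∃ t₁ t₂ : I → ZMod 2, ∀ s : I → ZMod 2,
      ¬ (J'.image (· + t₁) ∪ J'.image (· + t₂) ⊆ J.image (· + s)) := by
  classical
  have h2' : ∀ a : ZMod 2, a + a = 0 := by decide
  have hself : ∀ x t : I → ZMod 2, (x + t) + t = x := by
    intro x t; funext i; simp [add_assoc, h2' (t i)]
  have hmem : ∀ (t x : I → ZMod 2) (S : Finset (I → ZMod 2)),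
      x ∈ S.image (· + t) ↔ x + t ∈ S := by
    intro t x S
    constructor
    · rintro h
      simp only [Finset.mem_image] at h
      obtain ⟨a, ha, rfl⟩ := h
      simpa [hself] using ha
    · intro h
      exact Finset.mem_image.2 ⟨x + t, h, hself x t⟩
  set N := Fintype.card (I → ZMod 2) with hNdef
  have hN : N = 2 ^ Fintype.card I := by
    simp [hNdef, Fintype.card_fun, ZMod.card]
  set A : Finset (I → ZMod 2) := J'ᶜ with hA
  -- sum identity
  have hsum : ∑ t : I → ZMod 2, (A ∩ A.image (· + t)).card = A.card ^ 2 := by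
    have key : ∀ t, (A ∩ A.image (· + t)).card
        = (A.filter (fun x => x + t ∈ A)).card := by
      intro t; congr 1; ext x
      simp only [Finset.mem_inter, Finset.mem_filter, hmem t x A]
    simp_rw [key, Finset.card_filter]
    rw [Finset.sum_comm]
    have inner : ∀ x : I → ZMod 2,
        (∑ t : I → ZMod 2, if x + t ∈ A then 1 else 0) = A.card := by
      intro x
      rw [← Finset.card_filter]
      apply Finset.card_bij (fun t _ => x + t)
      · intro t ht; exact (Finset.mem_filter.1 ht).2
      · intro t1 h1 t2 h2 h
        have := congrArg (fun y => x + y) h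
        simpa [← add_assoc, show x + x = 0 by funext i; exact h2' (x i)] using h
      · intro a ha
        refine ⟨x + a, Finset.mem_filter.2 ⟨Finset.mem_univ _, ?_⟩, ?_⟩
        · simpa [← add_assoc, show x + x = 0 by funext i; exact h2' (x i)] using ha
        · funext i; simp [← add_assoc, h2' (x i)]
    calc ∑ x ∈ A, ∑ t : I → ZMod 2, (if x + t ∈ A then 1 else 0)
        = ∑ x ∈ A, A.card := Finset.sum_congr rfl (fun x _ => inner x)
      _ = A.card ^ 2 := by rw [Finset.sum_const, smul_eq_mul, sq]
  -- pigeonhole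
  obtain ⟨t, ht⟩ : ∃ t : I → ZMod 2, (A ∩ A.image (· + t)).card * N ≤ A.card ^ 2 := by
    by_contra h
    push_neg at h
    have hlt := Finset.sum_lt_sum_of_nonempty Finset.univ_nonempty
      (fun t _ => h t)
    rw [Finset.sum_const, ← Finset.sum_mul, hsum, Finset.card_univ, smul_eq_mul,
      ← hNdef, Nat.mul_comm] at hlt
    exact lt_irrefl _ hlt
  set c := (A ∩ A.image (· + t)).card with hc
  -- real arithmetic
  have hNpos : (0:ℝ) < N := by
    rw [hN]; positivity
  have hNR : (N : ℝ) = 2 ^ Fintype.card I := by rw [hN]; push_cast; ring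
  have hJ'card : (J'.card : ℝ) = (1 - δ) * N := by
    rw [hNR]; field_simp at hJ' ⊢; linarith [hJ']
  have hJcard : (J.card : ℝ) = (1 - ε) * N := by
    rw [hNR]; field_simp at hJ ⊢; linarith [hJ]
  have hJ'le : J'.card ≤ N := Finset.card_le_univ J'
  have hJle : J.card ≤ N := Finset.card_le_univ J
  have hAcard : (A.card : ℝ) = δ * N := by
    rw [hA, Finset.card_compl, Nat.cast_sub hJ'le, hJ'card]; ring
  have hcR : (c : ℝ) * N ≤ (δ * N) ^ 2 := by
    have := ht
    rw [← hAcard]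
    exact_mod_cast this
  have hclt : (c : ℝ) < (N : ℝ) - J.card := by
    have hε : (N:ℝ) - J.card = ε * N := by rw [hJcard]; ring
    rw [hε]
    have : (c:ℝ) * N < ε * N * N := by nlinarith [mul_lt_mul_of_pos_right (mul_lt_mul_of_pos_right h1 hNpos) hNpos]
    exact lt_of_mul_lt_mul_right this hNpos.le
  have hcnat : c + J.card < N := by
    have : (c : ℝ) + J.card < N := by linarith
    exact_mod_cast this
  refine ⟨0, t, fun s hsub => ?_⟩
  -- complement containment
  have hcompl : (J.image (· + s))ᶜ ⊆ A ∩ A.image (· + t) := by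
    intro x hx
    rw [Finset.mem_compl] at hx
    have hx1 : x ∉ J' := fun h => hx (hsub (Finset.mem_union_left _
      (by simpa [hmem] using (hmem 0 x J').2 (by simpa using h))))
    have hx2 : x ∉ J'.image (· + t) := fun h => hx (hsub (Finset.mem_union_right _ h))
    rw [Finset.mem_inter]
    constructor
    · exact Finset.mem_compl.2 hx1
    · rw [hmem]
      exact Finset.mem_compl.2 (fun h => hx2 ((hmem t x J').2 h))
  have hcard1 : (J.image (· + s)).card = J.card :=
    Finset.card_image_of_injective _ (fun a b h => by
      have := congrArg (fun y => y + s) h; simpa [hself] using this)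
  have hcard2 : N - J.card ≤ c := by
    have := Finset.card_le_card hcompl
    rwa [Finset.card_compl, hcard1, ← hNdef] at this
  omega
end

section
/- A set F ⊆ 2^ω is meager if and only if there exists a partition of ω into consecutive finite intervals {I_n : n ∈ ω} and a function x_F ∈ 2^ω such that F ⊆ {x ∈ 2^ω : for all but finitely many n, x↾I_n ≠ x_F↾I_n}. -/
open Filter

/-- Cylinders are open. -/
lemma cyl_isOpen (u : ℕ → ZMod 2) (N : ℕ) :
    IsOpen {x : ℕ → ZMod 2 | ∀ i < N, x i = u i} := by
  have : {x : ℕ → ZMod 2 | ∀ i < N, x i = u i}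
      = Set.pi (Set.Iio N) (fun i => {u i}) := by
    ext x; simp [Set.mem_pi]
  rw [this]
  exact isOpen_set_pi (Set.finite_Iio N) (fun a _ => isOpen_discrete _)

/-- Every point of an open set has a cylinder neighborhood inside it. -/
lemma cyl_nhd {O : Set (ℕ → ZMod 2)} (hO : IsOpen O) {y : ℕ → ZMod 2} (hy : y ∈ O) :
    ∃ N, ∀ x : ℕ → ZMod 2, (∀ i < N, x i = y i) → x ∈ O := by
  have hmem : O ∈ nhds y := hO.mem_nhds hy
  rw [nhds_pi, Filter.mem_pi] at hmem
  obtain ⟨I, hI, t, ht, hsub⟩ := hmem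
  obtain ⟨N, hN⟩ := hI.bddAbove
  refine ⟨N + 1, fun x hx => hsub ?_⟩
  intro i hi
  have : x i = y i := hx i (Nat.lt_succ_of_le (hN hi))
  rw [this]
  have := ht i
  rwa [nhds_discrete, Filter.mem_pure] at this

/-- A patched function. -/
def patch (a : ℕ) (s t : ℕ → ZMod 2) : ℕ → ZMod 2 := fun i => if i < a then s i else t i

lemma step_lemma {C : Set (ℕ → ZMod 2)} (hCo : IsOpen Cᶜ) (hCd : Dense Cᶜ) (a : ℕ)
    (L : List (ℕ → ZMod 2)) :
    ∀ b : ℕ, a ≤ b → ∀ t : ℕ → ZMod 2,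
      ∃ b', b ≤ b' ∧ ∃ t' : ℕ → ZMod 2, (∀ i < b, t' i = t i) ∧
        ∀ s ∈ L, ∀ x : ℕ → ZMod 2, (∀ i < b', x i = patch a s t' i) → x ∉ C := by
  induction L with
  | nil =>
      intro b hb t
      exact ⟨b, le_refl _, t, fun _ _ => rfl, by simp⟩
  | cons s L ih =>
      intro b hb t
      obtain ⟨b', hb', t', ht', hL⟩ := ih b hb t
      set p : ℕ → ZMod 2 := patch a s t' with hp
      -- find a point of Cᶜ in the cylinder around p of length b'
      have hopen : IsOpen {x : ℕ → ZMod 2 | ∀ i < b', x i = p i} := cyl_isOpen p b'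
      have hne : ({x : ℕ → ZMod 2 | ∀ i < b', x i = p i}).Nonempty := ⟨p, fun _ _ => rfl⟩
      obtain ⟨y, hyC, hyp⟩ := hCd.exists_mem_open hopen hne
      obtain ⟨N, hN⟩ := cyl_nhd hCo hyC
      refine ⟨max b' N, le_trans hb' (le_max_left _ _),
        fun i => if i < b' then t' i else y i, ?_, ?_⟩
      · intro i hi
        have hib' : i < b' := lt_of_lt_of_le hi hb'
        simp only [hib', if_true]
        exact ht' i hi
      · intro s' hs' x hx
        rcases List.mem_cons.mp hs' with h | h
        · subst h
          apply hN
          intro i hi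
          have hib : i < max b' N := lt_of_lt_of_le hi (le_max_right _ _)
          have hxi := hx i hib
          by_cases hia : i < a
          · rw [hxi]
            have hyi : y i = p i := hyp i (lt_of_lt_of_le hia (le_trans hb hb'))
            rw [hyi, hp]
            unfold patch
            simp [hia]
          · by_cases hib' : i < b'
            · rw [hxi]
              have hyi : y i = p i := hyp i hib'
              rw [hyi, hp]
              unfold patch
              simp [hia, hib']
            · rw [hxi]
              unfold patch
              simp [hia, hib']
        · refine hL s' h x ?_
          intro i hi
          have := hx i (lt_of_lt_of_le hi (le_max_left _ _))
          rw [this]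
          unfold patch
          by_cases hia : i < a
          · simp [hia]
          · simp [hia, hi]

/-- Key lemma: given a closed set with empty interior, one can choose a block of values
beyond `a` avoiding it. -/
lemma key_lemma {C : Set (ℕ → ZMod 2)} (hCc : IsClosed C) (hCi : interior C = ∅)
    (a : ℕ) (t0 : ℕ → ZMod 2) :
    ∃ b, a < b ∧ ∃ t : ℕ → ZMod 2, (∀ i < a, t i = t0 i) ∧
      ∀ x : ℕ → ZMod 2, (∀ i, a ≤ i → i < b → x i = t i) → x ∉ C := by
  have hCo : IsOpen Cᶜ := hCc.isOpen_compl
  have hCd : Dense Cᶜ := interior_eq_empty_iff_dense_compl.mp hCi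
  set L : List (ℕ → ZMod 2) :=
    (Finset.univ : Finset (Fin a → ZMod 2)).toList.map
      (fun v => fun i => if h : i < a then v ⟨i, h⟩ else 0) with hL
  obtain ⟨b', hb', t', ht', hmain⟩ := step_lemma hCo hCd a L (a + 1) (Nat.le_succ a) t0
  refine ⟨b', lt_of_lt_of_le (Nat.lt_succ_self a) hb', t',
    fun i hi => ht' i (lt_of_lt_of_le hi (Nat.le_succ a)), ?_⟩
  intro x hx
  set s : ℕ → ZMod 2 := fun i => if h : i < a then x i else 0 with hs
  have hsL : s ∈ L := by
    rw [hL, List.mem_map]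
    exact ⟨fun j => x j, Finset.mem_toList.mpr (Finset.mem_univ _), rfl⟩
  refine hmain s hsL x ?_
  intro i hi
  unfold patch
  by_cases hia : i < a
  · rw [if_pos hia, hs]
    simp [hia]
  · rw [if_neg hia]
    exact hx i (le_of_not_gt hia) hi

/-- Build the partition and the function from a sequence of closed sets with empty interior. -/
lemma build {C : ℕ → Set (ℕ → ZMod 2)} (hc : ∀ n, IsClosed (C n))
    (hi : ∀ n, interior (C n) = ∅) :
    ∃ k : ℕ → ℕ, StrictMono k ∧ k 0 = 0 ∧ ∃ xF : ℕ → ZMod 2,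
      ∀ n, ∀ x : ℕ → ZMod 2, (∀ i, k n ≤ i → i < k (n + 1) → x i = xF i) → x ∉ C n := by
  have H : ∀ n (a : ℕ) (t0 : ℕ → ZMod 2), ∃ p : ℕ × (ℕ → ZMod 2),
      a < p.1 ∧ (∀ i < a, p.2 i = t0 i) ∧
        ∀ x : ℕ → ZMod 2, (∀ i, a ≤ i → i < p.1 → x i = p.2 i) → x ∉ C n := by
    intro n a t0
    obtain ⟨b, hb, t, ht, hmain⟩ := key_lemma (hc n) (hi n) a t0
    exact ⟨(b, t), hb, ht, hmain⟩
  choose f h1 h2 h3 using H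
  set g : ℕ → ℕ × (ℕ → ZMod 2) :=
    fun n => Nat.rec ((0 : ℕ), (0 : ℕ → ZMod 2)) (fun n p => f n p.1 p.2) n with hg
  set k : ℕ → ℕ := fun n => (g n).1 with hk
  have hstep : ∀ n, g (n + 1) = f n (g n).1 (g n).2 := fun n => rfl
  have hmono : StrictMono k := by
    apply strictMono_nat_of_lt_succ
    intro n
    exact h1 n (g n).1 (g n).2
  have hk0 : k 0 = 0 := rfl
  -- agreement of the partial functions
  have hagree : ∀ n m, n ≤ m → ∀ i < k n, (g m).2 i = (g n).2 i := by
    intro n m hnm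
    induction m, hnm using Nat.le_induction with
    | base => intro i _; rfl
    | succ m hnm ih =>
        intro i hik
        have hkk : k n ≤ k m := hmono.monotone hnm
        have := h2 m (g m).1 (g m).2 i (lt_of_lt_of_le hik hkk)
        rw [hstep m, this, ih i hik]
  set xF : ℕ → ZMod 2 := fun i => (g (i + 1)).2 i with hxF
  have hxFval : ∀ n, ∀ i < k (n + 1), xF i = (g (n + 1)).2 i := by
    intro n i hik
    have hik' : i < k (i + 1) := lt_of_lt_of_le (Nat.lt_succ_self i) (hmono.le_apply)
    have e1 := hagree (i + 1) (max (i + 1) (n + 1)) (le_max_left _ _) i hik'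
    have e2 := hagree (n + 1) (max (i + 1) (n + 1)) (le_max_right _ _) i hik
    rw [hxF]
    dsimp only
    rw [← e1, e2]
  refine ⟨k, hmono, hk0, xF, ?_⟩
  intro n x hx
  refine h3 n (g n).1 (g n).2 x ?_
  intro i hi1 hi2
  have hi2' : i < k (n + 1) := hi2
  exact (hx i hi1 hi2').trans (hxFval n i hi2')

theorem stmt_2 (F : Set (ℕ → ZMod 2)) :
    IsMeagre F ↔
      ∃ k : ℕ → ℕ, StrictMono k ∧ k 0 = 0 ∧
        ∃ xF : ℕ → ZMod 2,
          F ⊆ {x | ∀ᶠ n in atTop, ∃ i ∈ Set.Ico (k n) (k (n + 1)), x i ≠ xF i} := by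
  constructor
  · -- forward direction
    intro hF
    obtain ⟨S, hSnwd, hScount, hSsub⟩ := isMeagre_iff_countable_union_isNowhereDense.mp hF
    set S' : Set (Set (ℕ → ZMod 2)) := insert ∅ S with hS'
    have hS'count : S'.Countable := hScount.insert _
    have hS'nwd : ∀ t ∈ S', IsNowhereDense t := by
      intro t ht
      rcases ht with h | h
      · rw [h]; exact isNowhereDense_empty
      · exact hSnwd t h
    obtain ⟨f, hf⟩ := hS'count.exists_eq_range ⟨∅, Set.mem_insert _ _⟩
    set D : ℕ → Set (ℕ → ZMod 2) := fun n => closure (f n) with hD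
    have hDc : ∀ n, IsClosed (D n) := fun n => isClosed_closure
    have hDnwd : ∀ n, IsNowhereDense (D n) := by
      intro n
      have : f n ∈ S' := by rw [hf]; exact ⟨n, rfl⟩
      exact (hS'nwd _ this).closure
    have hDi : ∀ n, interior (D n) = ∅ := fun n => (hDc n).isNowhereDense_iff.mp (hDnwd n)
    set C : ℕ → Set (ℕ → ZMod 2) := fun n => ⋃ m ≤ n, D m with hC
    have hCc : ∀ n, IsClosed (C n) := by
      intro n
      exact Set.Finite.isClosed_biUnion (Set.finite_Iic n) (fun m _ => hDc m)
    have hCi : ∀ n, interior (C n) = ∅ := by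
      intro n
      induction n with
      | zero =>
          have : C 0 = D 0 := by
            rw [hC]; ext x; simp [Nat.le_zero]
          rw [this]; exact hDi 0
      | succ n ih =>
          have hCsucc : C (n + 1) = C n ∪ D (n + 1) := Set.biUnion_le_succ D n
          rw [hCsucc, interior_eq_empty_iff_dense_compl, Set.compl_union]
          have d1 : Dense (C n)ᶜ := interior_eq_empty_iff_dense_compl.mp ih
          have d2 : Dense (D (n + 1))ᶜ := interior_eq_empty_iff_dense_compl.mp (hDi (n + 1))
          exact d1.inter_of_isOpen_left d2 (hCc n).isOpen_compl
    obtain ⟨k, hkm, hk0, xF, hmain⟩ := build hCc hCi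
    refine ⟨k, hkm, hk0, xF, ?_⟩
    intro x hxF
    have hxU : x ∈ ⋃₀ S := hSsub hxF
    obtain ⟨s, hsS, hxs⟩ := hxU
    have : s ∈ S' := Set.mem_insert_of_mem _ hsS
    rw [hf] at this
    obtain ⟨m, hm⟩ := this
    have hxC : ∀ n, m ≤ n → x ∈ C n := by
      intro n hmn
      rw [hC]
      exact Set.mem_biUnion hmn (subset_closure (hm ▸ hxs))
    simp only [Set.mem_setOf_eq]
    filter_upwards [eventually_ge_atTop m] with n hn
    by_contra hcon
    push_neg at hcon
    exact hmain n x (fun i hi1 hi2 => hcon i ⟨hi1, hi2⟩) (hxC n hn)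
  · -- backward direction
    rintro ⟨k, hkm, hk0, xF, hsub⟩
    set A : ℕ → Set (ℕ → ZMod 2) :=
      fun N => {x | ∀ n, N ≤ n → ∃ i ∈ Set.Ico (k n) (k (n + 1)), x i ≠ xF i} with hA
    have hAc : ∀ N, IsClosed (A N) := by
      intro N
      have : A N = ⋂ n ∈ {n | N ≤ n}, ⋃ i ∈ Set.Ico (k n) (k (n + 1)), {x : ℕ → ZMod 2 | x i ≠ xF i} := by
        ext x
        simp [hA]
      rw [this]
      refine isClosed_biInter (fun n _ => ?_)
      refine Set.Finite.isClosed_biUnion (Set.finite_Ico _ _) (fun i _ => ?_)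
      have : {x : ℕ → ZMod 2 | x i ≠ xF i} = (fun x : ℕ → ZMod 2 => x i) ⁻¹' {xF i}ᶜ := rfl
      rw [this]
      exact (isClosed_discrete _).preimage (continuous_apply i)
    have hAi : ∀ N, interior (A N) = ∅ := by
      intro N
      rw [Set.eq_empty_iff_forall_notMem]
      intro y hy
      obtain ⟨N', hN'⟩ := cyl_nhd isOpen_interior hy
      set n := max N N' with hn
      set x : ℕ → ZMod 2 := fun i => if k n ≤ i ∧ i < k (n + 1) then xF i else y i with hx
      have hxA : x ∈ A N := by
        apply interior_subset
        apply hN'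
        intro i hi
        rw [hx]
        dsimp only
        rw [if_neg]
        rintro ⟨h1, _⟩
        have : i < k n := lt_of_lt_of_le (lt_of_lt_of_le hi (le_max_right N N')) hkm.le_apply
        omega
      obtain ⟨i, hiI, hine⟩ := hxA n (le_max_left N N')
      apply hine
      rw [hx]
      dsimp only
      rw [if_pos ⟨hiI.1, hiI.2⟩]
    rw [isMeagre_iff_countable_union_isNowhereDense]
    refine ⟨Set.range A, ?_, Set.countable_range A, ?_⟩
    · rintro t ⟨N, rfl⟩
      exact (hAc N).isNowhereDense_iff.mpr (hAi N)
    · intro x hxF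
      have := hsub hxF
      simp only [Set.mem_setOf_eq, eventually_atTop] at this
      obtain ⟨N, hN⟩ := this
      exact ⟨A N, ⟨N, rfl⟩, fun n hn => hN n hn⟩
end

section
/- (Carlson) For every meager set F ⊆ 2^ω there exists a meager set F' ⊆ 2^ω such that for all x₁, x₂ ∈ 2^ω there exists x ∈ 2^ω with ((2^ω \ F') + x₁) ∪ ((2^ω \ F') + x₂) ⊆ (2^ω \ F) + x. -/
/-!
Every meagre `F ⊆ 2^ω` is disjoint from the set of points that agree with some fixed `y` on
infinitely many blocks `I n = [k n, k (n + 1))` of a partition of `ω` into finite intervals: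
the blocks are chosen one after the other, `y` on `I n` forcing every point into the `n`-th set of
a decreasing sequence of dense open sets whose intersection misses `F`.

Take `F'` to be the set of points agreeing with `y` on only finitely many of the merged blocks
`I (2n) ∪ I (2n+1)`; it is meagre. Given `x₁, x₂`, let `x` be `x₁` on even and `x₂` on odd blocks.
If `h ∉ F'` then `h + x₁ - x` coincides with `h`, hence with `y`, on infinitely many even blocks,
so it avoids `F`; symmetrically for `x₂` and the odd blocks.
-/

open Set Filter Function PiNat

def frequentlyEqOn {X : Type*} (B : ℕ → Set ℕ) (y : ℕ → X) : Set (ℕ → X) :=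
  {x | ∃ᶠ n in atTop, EqOn x y (B n)}

lemma frequentlyEqOn_mono {X : Type*} {B B' : ℕ → Set ℕ} (h : ∀ n, B' n ⊆ B n) (y : ℕ → X) :
    frequentlyEqOn B y ⊆ frequentlyEqOn B' y :=
  fun _ hx => hx.mono fun n hn => hn.mono (h n)

lemma exists_eqOn_of_pairwise_disjoint {ι α β : Type*} [Nonempty ι] {B : ι → Set α}
    (hB : Pairwise (Disjoint on B)) (t : ι → α → β) : ∃ y : α → β, ∀ i, EqOn y (t i) (B i) := by
  classical
  refine ⟨fun a => if h : ∃ i, a ∈ B i then t h.choose a else t (Classical.arbitrary ι) a,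
    fun i a ha => ?_⟩
  have h : ∃ i, a ∈ B i := ⟨i, ha⟩
  have hi : h.choose = i := hB.eq (not_disjoint_iff.2 ⟨a, h.choose_spec, ha⟩)
  simp only [dif_pos h, hi]

lemma StrictMono.eventually_Ico_subset_Ici {k : ℕ → ℕ} (hk : StrictMono k) (N : ℕ) :
    ∀ᶠ n in atTop, Ico (k n) (k (n + 1)) ⊆ Ici N :=
  (hk.tendsto_atTop.eventually_ge_atTop N).mono fun _ hn =>
    Ico_subset_Ici_self.trans (Ici_subset_Ici.2 hn)

section Topology

variable {X : Type*} [TopologicalSpace X] [DiscreteTopology X]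

lemma isOpen_setOf_eqOn {s : Set ℕ} (hs : s.Finite) (y : ℕ → X) : IsOpen {x | EqOn x y s} := by
  have : {x | EqOn x y s} = s.pi fun i => {y i} := by
    ext x
    simp [EqOn, Set.mem_pi]
  exact this ▸ isOpen_set_pi hs fun _ _ => isOpen_discrete _

lemma exists_cylinder_subset {U : Set (ℕ → X)} (hU : IsOpen U) {u : ℕ → X} (hu : u ∈ U) :
    ∃ N, cylinder u N ⊆ U := by
  obtain ⟨_, ⟨v, N, rfl⟩, huv, hvU⟩ :=
    (isTopologicalBasis_cylinders fun _ => X).exists_subset_of_mem_open hu hU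
  exact ⟨N, mem_cylinder_iff_eq.1 huv ▸ hvU⟩

theorem frequentlyEqOn_mem_residual {B : ℕ → Set ℕ} (hfin : ∀ n, (B n).Finite)
    (hB : ∀ N, ∀ᶠ n in atTop, B n ⊆ Ici N) (y : ℕ → X) :
    frequentlyEqOn B y ∈ residual (ℕ → X) := by
  have : frequentlyEqOn B y = ⋂ m, ⋃ n ≥ m, {x | EqOn x y (B n)} := by
    ext x
    simp [frequentlyEqOn, frequently_atTop]
  rw [this, countable_iInter_mem]
  refine fun m => residual_of_dense_open
    (isOpen_iUnion fun n => isOpen_iUnion fun _ => isOpen_setOf_eqOn (hfin n) y) ?_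
  rw [dense_iff_inter_open]
  rintro V hV ⟨v, hv⟩
  obtain ⟨N, hN⟩ := exists_cylinder_subset hV hv
  obtain ⟨n, hn, hmn⟩ := ((hB N).and (eventually_ge_atTop m)).exists
  classical
  refine ⟨(B n).piecewise y v, hN fun i hi => ?_, mem_biUnion hmn (piecewise_eqOn _ _ _)⟩
  exact piecewise_eq_of_notMem _ _ _ fun h => (hn h).not_gt hi

variable [Nonempty X]

lemma exists_Ico_eqOn_mem_of_restrict_mem {U : Set (ℕ → X)} (hU : IsOpen U) (hd : Dense U)
    (a : ℕ) {P : Set (Fin a → X)} (hP : P.Finite) :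
    ∃ b, a < b ∧ ∃ t : ℕ → X,
      ∀ x, EqOn x t (Ico a b) → (fun i : Fin a => x i) ∈ P → x ∈ U := by
  induction P, hP using Set.Finite.induction_on with
  | empty => exact ⟨a + 1, a.lt_succ_self, fun _ => Classical.arbitrary X, fun _ _ h => h.elim⟩
  | @insert σ P _ _ ih =>
    -- `u` extends `t` on `[a, b)`, so it serves the old prefixes `P` as well as the new one `σ`
    obtain ⟨b, hab, t, ht⟩ := ih
    let z : ℕ → X := fun i => if h : i < a then σ ⟨i, h⟩ else t i
    obtain ⟨u, huz, huU⟩ :=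
      hd.inter_open_nonempty _ (isOpen_cylinder _ z b) ⟨z, self_mem_cylinder z b⟩
    obtain ⟨N, hN⟩ := exists_cylinder_subset hU huU
    have hut : EqOn u t (Ico a b) := fun i hi => by
      simp [huz i hi.2, z, not_lt.2 hi.1]
    refine ⟨max b N, hab.trans_le (le_max_left _ _), u, fun x hx hxP => ?_⟩
    have hxt : EqOn x t (Ico a b) :=
      (hx.mono (Ico_subset_Ico_right (le_max_left _ _))).trans hut
    rcases hxP with rfl | hxP
    · refine hN fun i hiN => ?_
      rcases lt_or_ge i a with hia | hai
      · simp [huz i (hia.trans hab), z, hia]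
      · exact hx ⟨hai, hiN.trans_le (le_max_right _ _)⟩
    · exact ht x hxt hxP

lemma exists_Ico_eqOn_subset [Finite X] {U : Set (ℕ → X)} (hU : IsOpen U) (hd : Dense U)
    (a : ℕ) : ∃ b, a < b ∧ ∃ t : ℕ → X, {x | EqOn x t (Ico a b)} ⊆ U := by
  obtain ⟨b, hab, t, ht⟩ := exists_Ico_eqOn_mem_of_restrict_mem hU hd a (toFinite univ)
  exact ⟨b, hab, t, fun x hx => ht x hx (mem_univ _)⟩

theorem IsMeagre.exists_disjoint_frequentlyEqOn [Finite X] {F : Set (ℕ → X)} (hF : IsMeagre F) :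
    ∃ k : ℕ → ℕ, StrictMono k ∧
      ∃ y, Disjoint F (frequentlyEqOn (fun n => Ico (k n) (k (n + 1))) y) := by
  obtain ⟨G, hGF, hG, hGd⟩ := mem_residual.1 hF
  obtain ⟨f, hfo, rfl⟩ := hG.eq_iInter_nat
  have hU : ∀ n, IsOpen (dissipate f n) := fun n =>
    (finite_le_nat n).isOpen_biInter fun m _ => hfo m
  have hUd : ∀ n, Dense (dissipate f n) := fun n => hGd.mono (iInter_subset_dissipate n)
  choose b hb t ht using fun n => exists_Ico_eqOn_subset (hU n) (hUd n)
  let k : ℕ → ℕ := fun n => Nat.rec 0 (fun m a => b m a) n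
  have hk : StrictMono k := strictMono_nat_of_lt_succ fun n => hb n (k n)
  obtain ⟨y, hy⟩ := exists_eqOn_of_pairwise_disjoint
    hk.monotone.pairwise_disjoint_on_Ico_succ fun n => t n (k n)
  refine ⟨k, hk, y, disjoint_right.2 fun x hx hxF => hGF (mem_iInter.2 fun m => ?_) hxF⟩
  obtain ⟨n, hmn, hxn⟩ := frequently_atTop.1 hx m
  exact dissipate_subset hmn (ht n (k n) (hxn.trans (hy n)))

end Topology

lemma add_mem_image_add_compl {G : Type*} [AddGroup G] {F : Set (ℕ → G)} {B : ℕ → Set ℕ}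
    {y : ℕ → G} (hF : Disjoint F (frequentlyEqOn B y)) {g : ℕ → ℕ}
    (hg : Tendsto g atTop atTop) {x x₁ h : ℕ → G} (hx : ∀ n, EqOn x x₁ (B (g n)))
    (hh : h ∈ frequentlyEqOn (B ∘ g) y) : h + x₁ ∈ (· + x) '' Fᶜ := by
  rw [image_add_right]
  refine hF.notMem_of_mem_right (hg.frequently (hh.mono fun n hn i hi => ?_))
  simp [hx n hi, hn hi]

theorem stmt_3 (F : Set (ℕ → ZMod 2)) (hF : IsMeagre F) :
    ∃ F' : Set (ℕ → ZMod 2), IsMeagre F' ∧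
      ∀ x₁ x₂ : ℕ → ZMod 2, ∃ x : ℕ → ZMod 2,
        ((· + x₁) '' F'ᶜ) ∪ ((· + x₂) '' F'ᶜ) ⊆ (· + x) '' Fᶜ := by
  obtain ⟨k, hk, y, hFy⟩ := hF.exists_disjoint_frequentlyEqOn
  set B : ℕ → Set ℕ := fun n => Ico (k n) (k (n + 1))
  have h2 : Tendsto (fun n => 2 * n) atTop atTop := tendsto_id.const_mul_atTop' two_pos
  have h2' : Tendsto (fun n => 2 * n + 1) atTop atTop :=
    tendsto_atTop_mono (fun n => (2 * n).le_succ) h2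
  refine ⟨(frequentlyEqOn (fun n => B (2 * n) ∪ B (2 * n + 1)) y)ᶜ, ?_, fun x₁ x₂ => ?_⟩
  · rw [IsMeagre, compl_compl]
    refine frequentlyEqOn_mem_residual
      (fun n => (finite_Ico _ _).union (finite_Ico _ _)) (fun N => ?_) y
    filter_upwards [h2.eventually (hk.eventually_Ico_subset_Ici N),
      h2'.eventually (hk.eventually_Ico_subset_Ici N)] with n using union_subset
  obtain ⟨x, hx⟩ := exists_eqOn_of_pairwise_disjoint hk.monotone.pairwise_disjoint_on_Ico_succ
    fun n => if Even n then x₁ else x₂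
  refine ⟨x, union_subset ?_ ?_⟩ <;> rintro _ ⟨h, hh, rfl⟩ <;> rw [compl_compl] at hh
  · refine add_mem_image_add_compl hFy h2 (fun n => ?_)
      (frequentlyEqOn_mono (fun _ => subset_union_left) y hh)
    simpa [even_two_mul] using hx (2 * n)
  · refine add_mem_image_add_compl hFy h2' (fun n => ?_)
      (frequentlyEqOn_mono (fun _ => subset_union_right) y hh)
    simpa [Nat.not_even_two_mul_add_one] using hx (2 * n + 1)
end

section
/- If φ* holds (for every null set F there is a null set F' such that for all x₁, x₂ there is x with ((2^ω\F')+x₁) ∪ ((2^ω\F')+x₂) ⊆ (2^ω\F)+x), then the union of two strongly meager sets is strongly meager. -/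
open MeasureTheory Measure

noncomputable def μ : Measure (ℕ → ZMod 2) :=
  addHaarMeasure ⟨⟨Set.univ, isCompact_univ⟩, by simp⟩

/-- `X` is strongly meager if `X + H ≠ 2^ω` for every null set `H`. -/
def StronglyMeager (X : Set (ℕ → ZMod 2)) : Prop :=
  ∀ H : Set (ℕ → ZMod 2), μ H = 0 → Set.image2 (· + ·) X H ≠ Set.univ

private lemma add_self_zero (a : ℕ → ZMod 2) : a + a = 0 :=
  funext fun n => CharTwo.add_self_eq_zero (a n)

theorem stmt_12
    (phiStar : ∀ F : Set (ℕ → ZMod 2), μ F = 0 →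
      ∃ F' : Set (ℕ → ZMod 2), μ F' = 0 ∧
        ∀ x₁ x₂ : ℕ → ZMod 2, ∃ x : ℕ → ZMod 2,
          ((· + x₁) '' F'ᶜ) ∪ ((· + x₂) '' F'ᶜ) ⊆ (· + x) '' Fᶜ)
    (X Y : Set (ℕ → ZMod 2)) (hX : StronglyMeager X) (hY : StronglyMeager Y) :
    StronglyMeager (X ∪ Y) := by
  intro H hH hcontra
  obtain ⟨F', hF', hprop⟩ := phiStar H hH
  obtain ⟨t₁, ht₁⟩ := (Set.ne_univ_iff_exists_notMem _).mp (hX F' hF')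
  obtain ⟨t₂, ht₂⟩ := (Set.ne_univ_iff_exists_notMem _).mp (hY F' hF')
  obtain ⟨x, hx⟩ := hprop t₁ t₂
  -- X ⊆ (· + t₁) '' F'ᶜ
  have hXsub : X ⊆ (· + t₁) '' F'ᶜ := by
    intro a ha
    refine ⟨a + t₁, ?_, ?_⟩
    · intro hmem
      exact ht₁ ⟨a, ha, a + t₁, hmem, by
        show a + (a + t₁) = t₁
        rw [← add_assoc, add_self_zero, zero_add]⟩
    · show a + t₁ + t₁ = a
      rw [add_assoc, add_self_zero, add_zero]
  have hYsub : Y ⊆ (· + t₂) '' F'ᶜ := by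
    intro a ha
    refine ⟨a + t₂, ?_, ?_⟩
    · intro hmem
      exact ht₂ ⟨a, ha, a + t₂, hmem, by
        show a + (a + t₂) = t₂
        rw [← add_assoc, add_self_zero, zero_add]⟩
    · show a + t₂ + t₂ = a
      rw [add_assoc, add_self_zero, add_zero]
  -- x is not covered
  have hxmem : x ∈ Set.image2 (· + ·) (X ∪ Y) H := hcontra ▸ Set.mem_univ x
  obtain ⟨u, hu, h, hh, huh⟩ := hxmem
  have hu' : u ∈ (· + x) '' Hᶜ := by
    rcases hu with hu | hu
    · exact hx (Set.mem_union_left _ (hXsub hu))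
    · exact hx (Set.mem_union_right _ (hYsub hu))
  obtain ⟨w, hw, hwx⟩ := hu'
  -- u = w + x and u + h = x, so w = h
  have h1 : w + x + h = x := by
    show (fun x1 x2 => x1 + x2) ((fun y => y + x) w) h = x
    rw [hwx]; exact huh
  have h0 : w + h = 0 := by
    have e : w + h = (w + x + h) - x := by abel
    rw [e, h1]; exact sub_self x
  have hwh : w = h := by
    have := eq_neg_of_add_eq_zero_left h0
    rw [this]
    exact funext fun n => CharTwo.neg_eq (h n)
  exact hw (hwh ▸ hh)
end

section
/- Carlson's theorem φ implies that the union of two strong measure zero subsets of 2^ω is strong measure zero (in the characterization: X has strong measure zero iff X + F ≠ 2^ω for every meager F). -/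
/-- `X` has strong measure zero (GMS characterization): `X + F ≠ 2^ω` for every meager `F`. -/
def StrongMeasureZero (X : Set (ℕ → ZMod 2)) : Prop :=
  ∀ F : Set (ℕ → ZMod 2), IsMeagre F → Set.image2 (· + ·) X F ≠ Set.univ

lemma add_self_zmod2 (v : ℕ → ZMod 2) : v + v = 0 := by
  funext i
  exact CharTwo.add_self_eq_zero _

theorem stmt_13
    (phi : ∀ F : Set (ℕ → ZMod 2), IsMeagre F →
      ∃ F' : Set (ℕ → ZMod 2), IsMeagre F' ∧
        ∀ x₁ x₂ : ℕ → ZMod 2, ∃ x : ℕ → ZMod 2,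
          ((· + x₁) '' F'ᶜ) ∪ ((· + x₂) '' F'ᶜ) ⊆ (· + x) '' Fᶜ)
    (X Y : Set (ℕ → ZMod 2)) (hX : StrongMeasureZero X) (hY : StrongMeasureZero Y) :
    StrongMeasureZero (X ∪ Y) := by
  intro F hF
  obtain ⟨F', hF', hkey⟩ := phi F hF
  obtain ⟨x₁, hx₁⟩ : ∃ x₁, x₁ ∉ Set.image2 (· + ·) X F' := by
    by_contra h
    push_neg at h
    exact hX F' hF' (Set.eq_univ_of_forall h)
  obtain ⟨x₂, hx₂⟩ : ∃ x₂, x₂ ∉ Set.image2 (· + ·) Y F' := by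
    by_contra h
    push_neg at h
    exact hY F' hF' (Set.eq_univ_of_forall h)
  obtain ⟨x, hx⟩ := hkey x₁ x₂
  have hXsub : X ⊆ (· + x₁) '' F'ᶜ := by
    intro a ha
    refine ⟨a + x₁, fun hmem => hx₁ ⟨a, ha, a + x₁, hmem, ?_⟩, ?_⟩
    · show a + (a + x₁) = x₁
      rw [← add_assoc, add_self_zmod2, zero_add]
    · show a + x₁ + x₁ = a
      rw [add_assoc, add_self_zmod2, add_zero]
  have hYsub : Y ⊆ (· + x₂) '' F'ᶜ := by
    intro a ha
    refine ⟨a + x₂, fun hmem => hx₂ ⟨a, ha, a + x₂, hmem, ?_⟩, ?_⟩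
    · show a + (a + x₂) = x₂
      rw [← add_assoc, add_self_zmod2, zero_add]
    · show a + x₂ + x₂ = a
      rw [add_assoc, add_self_zmod2, add_zero]
  intro hcontra
  have hxmem : x ∈ Set.image2 (· + ·) (X ∪ Y) F := hcontra ▸ Set.mem_univ x
  obtain ⟨a, ha, b, hb, hab⟩ := hxmem
  have haim : a ∈ (· + x) '' Fᶜ := by
    cases ha with
    | inl h => exact hx (Or.inl (hXsub h))
    | inr h => exact hx (Or.inr (hYsub h))
  obtain ⟨c, hc, hcx⟩ := haim
  have hab' : a + b = x := hab
  have hcx' : c + x = a := hcx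
  have h1 : a + x = b := by rw [← hab', ← add_assoc, add_self_zmod2, zero_add]
  have h2 : a + x = c := by rw [← hcx', add_assoc, add_self_zmod2, add_zero]
  exact hc (by rwa [h1.symm.trans h2] at hb)
end

section
/- If F : 2^ω → 2^ω is a bijection mapping meager sets exactly onto null sets and such that for every X ⊆ 2^ω and y ∈ 2^ω there exists z with F[X + y] = F[X] + z, then the validity of φ for the meager ideal implies the validity of φ* for the null ideal. -/
open MeasureTheory Measure

/-!
Testing the translation property of `F` on the pair `{a, 0}` shows that in characteristic two
`F (a + y) = F a + (F y - F 0)`, i.e. `F` is affine. Hence `F` carries translates to translates,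
`F '' ((· + y) '' A) = (· + (F y - F 0)) '' (F '' A)`, with every translation of the target
realised, and as a bijection it commutes with complements. So `F` transports the whole
configuration in `φ` from the meagre ideal to the null ideal.
-/

section

variable {G H : Type*} [AddGroup G] [AddCommGroup H]

/-- The property `φ` of the paper for the ideal of sets satisfying `P`. -/
def PhiProperty (P : Set G → Prop) : Prop :=
  ∀ A : Set G, P A → ∃ A' : Set G, P A' ∧
    ∀ x₁ x₂ : G, ∃ x : G, ((· + x₁) '' A'ᶜ) ∪ ((· + x₂) '' A'ᶜ) ⊆ (· + x) '' Aᶜ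

lemma map_add_eq_add_sub_of_image_add (hH : ∀ x : H, x + x = 0) {F : G → H}
    (hF : Function.Injective F)
    (htrans : ∀ (X : Set G) (y : G), ∃ z : H, F '' ((· + y) '' X) = (· + z) '' (F '' X))
    (a y : G) : F (a + y) = F a + (F y - F 0) := by
  have hneg : ∀ x : H, -x = x := fun x => neg_eq_of_add_eq_zero_right (hH x)
  obtain ⟨z, hz⟩ := htrans {a, 0} y
  simp only [Set.image_pair, zero_add] at hz
  have hmem : ∀ w, w = F (a + y) ∨ w = F y → w = F a + z ∨ w = F 0 + z := by
    intro w hw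
    have : w ∈ ({F a + z, F 0 + z} : Set H) := hz ▸ hw
    simpa using this
  have ha : F (a + y) = F y → a = 0 := fun h => add_eq_right.mp (hF h)
  rcases hmem _ (.inl rfl) with h₁ | h₁ <;> rcases hmem _ (.inr rfl) with h₂ | h₂
  · simp [ha (h₁.trans h₂.symm)]
  · rw [h₁, h₂]; abel
  · rw [h₁, h₂, sub_eq_add_neg, hneg, ← add_assoc, ← add_assoc, hH, zero_add, add_comm]
  · simp [ha (h₁.trans h₂.symm)]

lemma PhiProperty.map_of_bijective (hH : ∀ x : H, x + x = 0) {F : G → H}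
    (hF : Function.Bijective F)
    (htrans : ∀ (X : Set G) (y : G), ∃ z : H, F '' ((· + y) '' X) = (· + z) '' (F '' X))
    {P : Set G → Prop} {Q : Set H → Prop} (hPQ : ∀ X, P X ↔ Q (F '' X))
    (hP : PhiProperty P) : PhiProperty Q := by
  have himage : ∀ (A : Set G) (y : G), F '' ((· + y) '' A) = (· + (F y - F 0)) '' (F '' A) := by
    intro A y
    simp only [Set.image_image]
    exact Set.image_congr fun a _ => map_add_eq_add_sub_of_image_add hH hF.injective htrans a y
  have hshift : ∀ w : H, ∃ y, F y - F 0 = w := fun w =>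
    (hF.surjective (w + F 0)).imp fun y hy => by rw [hy, add_sub_cancel_right]
  intro B hB
  have hFB : F '' (F ⁻¹' B) = B := Set.image_preimage_eq B hF.surjective
  obtain ⟨A', hA', hcover⟩ := hP (F ⁻¹' B) ((hPQ _).mpr (by rwa [hFB]))
  refine ⟨F '' A', (hPQ A').mp hA', fun x₁ x₂ => ?_⟩
  obtain ⟨y₁, rfl⟩ := hshift x₁
  obtain ⟨y₂, rfl⟩ := hshift x₂
  obtain ⟨y, hy⟩ := hcover y₁ y₂
  refine ⟨F y - F 0, ?_⟩
  have hsub := Set.image_mono (f := F) hy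
  rwa [Set.image_union, himage, himage, himage, Set.image_compl_eq hF,
    Set.image_compl_eq hF, hFB] at hsub

end

theorem stmt_16 (F : (ℕ → ZMod 2) → (ℕ → ZMod 2))
    (hbij : Function.Bijective F)
    (hmap : ∀ X : Set (ℕ → ZMod 2), IsMeagre X ↔ μ (F '' X) = 0)
    (htrans : ∀ (X : Set (ℕ → ZMod 2)) (y : ℕ → ZMod 2), ∃ z : ℕ → ZMod 2,
      F '' ((· + y) '' X) = (· + z) '' (F '' X))
    (phi : ∀ G : Set (ℕ → ZMod 2), IsMeagre G →
      ∃ G' : Set (ℕ → ZMod 2), IsMeagre G' ∧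
        ∀ x₁ x₂ : ℕ → ZMod 2, ∃ x : ℕ → ZMod 2,
          ((· + x₁) '' G'ᶜ) ∪ ((· + x₂) '' G'ᶜ) ⊆ (· + x) '' Gᶜ) :
    ∀ G : Set (ℕ → ZMod 2), μ G = 0 →
      ∃ G' : Set (ℕ → ZMod 2), μ G' = 0 ∧
        ∀ x₁ x₂ : ℕ → ZMod 2, ∃ x : ℕ → ZMod 2,
          ((· + x₁) '' G'ᶜ) ∪ ((· + x₂) '' G'ᶜ) ⊆ (· + x) '' Gᶜ :=
  PhiProperty.map_of_bijective CharTwo.add_self_eq_zero hbij htrans hmap phi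
end
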